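/- Let S be a real matrix with rank k ≥ 2 and singular values σ_1 ≥ ... ≥ σ_k > 0 with σ_1 > σ_k, and R_ill(S) = 1 / ((1/(2k))·Σ σ_i² − (1/2)·σ_k²). Then 1/log(κ(S)) ≤ σ_1²·R_ill(S), where κ(S) = σ_1/σ_k. -/
import Mathlib


open Matrix Finset

/-- For a real matrix `S` of rank `k ≥ 2` with singular values
`σ_1 ≥ ⋯ ≥ σ_k > 0` (via a compact SVD) and `σ_1 > σ_k`, setting
`R_ill(S) = 1/((1/(2k))·Σ σ_i² − (1/2)·σ_k²)`, we have
`1/log(κ(S)) ≤ σ_1²·R_ill(S)` where `κ(S) = σ_1/σ_k`. -/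
theorem stmt_6 (pr pc k : ℕ) (hk : 2 ≤ k)
    (S : Matrix (Fin pr) (Fin pc) ℝ)
    (U : Matrix (Fin pr) (Fin k) ℝ) (V : Matrix (Fin pc) (Fin k) ℝ)
    (σ : Fin k → ℝ)
    (hU : Uᵀ * U = 1) (hV : Vᵀ * V = 1)
    (hrank : S.rank = k)
    (hSVD : S = U * Matrix.diagonal σ * Vᵀ)
    (hpos : ∀ i, 0 < σ i) (hmono : Antitone σ)
    (hgap : σ ⟨k - 1, by omega⟩ < σ ⟨0, by omega⟩) :
    1 / Real.log (σ ⟨0, by omega⟩ / σ ⟨k - 1, by omega⟩)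
      ≤ (σ ⟨0, by omega⟩) ^ 2 *
        (1 / ((1 / (2 * (k : ℝ))) * (∑ i, (σ i) ^ 2)
          - (1 / 2) * (σ ⟨k - 1, by omega⟩) ^ 2)) := by
  set a := σ ⟨0, by omega⟩ with ha
  set b := σ ⟨k - 1, by omega⟩ with hb
  have hbpos : 0 < b := hpos _
  have hapos : 0 < a := hpos _
  have hba : b < a := hgap
  have hk0 : (0:ℝ) < k := by positivity
  -- sum bounds
  have hsumle : ∑ i, (σ i) ^ 2 ≤ (k:ℝ) * a ^ 2 := by
    calc ∑ i, (σ i) ^ 2 ≤ ∑ _i : Fin k, a ^ 2 := by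
          apply Finset.sum_le_sum
          intro i _
          have h1 : σ i ≤ a := hmono (by rw [Fin.le_def]; simp)
          have h2 : 0 < σ i := hpos i
          nlinarith
      _ = (k:ℝ) * a ^ 2 := by simp [mul_comm]
  have hsumgt : (k:ℝ) * b ^ 2 < ∑ i, (σ i) ^ 2 := by
    have : ∑ _i : Fin k, b ^ 2 < ∑ i, (σ i) ^ 2 := by
      apply Finset.sum_lt_sum
      · intro i _
        have h1 : b ≤ σ i := by
          apply hmono
          rw [Fin.le_def]
          have := i.2
          simp
          omega
        have h2 : 0 < b := hbpos
        nlinarith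
      · refine ⟨⟨0, by omega⟩, Finset.mem_univ _, ?_⟩
        nlinarith
    simpa [mul_comm] using this
  set D := (1 / (2 * (k : ℝ))) * (∑ i, (σ i) ^ 2) - (1 / 2) * b ^ 2 with hD
  have hDpos : 0 < D := by
    have h1 := mul_lt_mul_of_pos_left hsumgt (show (0:ℝ) < 1 / (2 * (k:ℝ)) by positivity)
    have h2 : (1 / (2 * (k:ℝ))) * ((k:ℝ) * b ^ 2) = (1 / 2) * b ^ 2 := by
      field_simp
    rw [hD, sub_pos]
    linarith
  have hDle : D ≤ (a ^ 2 - b ^ 2) / 2 := by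
    rw [hD]
    have h1 : (1 / (2 * (k : ℝ))) * (∑ i, (σ i) ^ 2) ≤ (1 / (2 * (k : ℝ))) * ((k:ℝ) * a ^ 2) := by
      apply mul_le_mul_of_nonneg_left hsumle (by positivity)
    have h2 : (1 / (2 * (k : ℝ))) * ((k:ℝ) * a ^ 2) = a ^ 2 / 2 := by
      field_simp
    nlinarith
  have hκ : 1 < a / b := (one_lt_div hbpos).mpr hba
  have hL : 0 < Real.log (a / b) := Real.log_pos hκ
  have hlog : 1 - b / a ≤ Real.log (a / b) := by
    have h := Real.log_le_sub_one_of_pos (show (0:ℝ) < b / a by positivity)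
    have hinv : Real.log (b / a) = - Real.log (a / b) := by
      rw [← Real.log_inv]
      congr 1
      field_simp
    linarith [h, hinv ▸ h]
  rw [mul_one_div, div_le_div_iff₀ hL hDpos]
  -- goal: 1 * D ≤ a ^ 2 * Real.log (a / b)
  have key : a ^ 2 * (1 - b / a) ≤ a ^ 2 * Real.log (a / b) := by
    apply mul_le_mul_of_nonneg_left hlog (by positivity)
  have hexp : a ^ 2 * (1 - b / a) = a ^ 2 - a * b := by
    field_simp
  nlinarith [sq_nonneg (a - b)]
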